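/- arXiv:1609.08826 — 4 statements merged into one kernel-verified Lean document; each statement's English description precedes it below -/
import Mathlib

section
/- Let k be a positive integer and N a real number with 2 ≤ N and k ≤ N. Then there exists an integer N_k with N ≤ N_k ≤ 2N such that for every divisor d of k with d ≤ √(2N), the distance of (N_k + 1/2)/d² from the nearest integer is at least c/(d(1 + (log k)²)) for some absolute constant c > 0 independent of N, k, d. -/
/-!
Fix a divisor `d ≤ √(2N)` of `k` and put `ε_d = c / (d (1 + log² k))`. The points `(n + 1/2)/d²`,
`n ∈ [N, 2N]`, are `1/d²`-spaced and never closer than `1/(2d²)` to an integer, so each integer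
has at most `4 ε_d d²` of them within `ε_d`, and only about `N/d²` integers are involved: at most
`20 ε_d N` of the `n` are bad for `d`. Summing over `d ∣ k` with `∑_{d ∣ k} 1/d ≤ 1 + log k` and
`1 + t ≤ 2 (1 + t²)` leaves at most `2N/5` bad `n` for `c = 1/100`, fewer than the `N - 1`
integers of `[N, 2N]`.
-/

open Real Finset

lemma Int.cast_card_Icc (a b : ℤ) : (#(Icc a b) : ℝ) = max ((b : ℝ) + 1 - a) 0 := by
  rw [Int.card_Icc, ← Int.cast_natCast, Int.toNat_eq_max]
  push_cast
  rfl

lemma Int.card_Icc_ceil_floor_le {u v : ℝ} (h : u ≤ v + 1) :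
    (#(Icc ⌈u⌉ ⌊v⌋) : ℝ) ≤ v - u + 1 := by
  rw [Int.cast_card_Icc]
  exact max_le (by linarith [Int.le_ceil u, Int.floor_le v]) (by linarith)

lemma Int.le_card_Icc_ceil_floor (u v : ℝ) : v - u - 1 ≤ (#(Icc ⌈u⌉ ⌊v⌋) : ℝ) := by
  rw [Int.cast_card_Icc]
  exact le_max_of_le_left (by linarith [Int.ceil_lt_add_one u, Int.sub_one_lt_floor v])

lemma one_div_two_le_abs_intCast_add_half (t : ℤ) : 1 / 2 ≤ |(t : ℝ) + 1 / 2| := by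
  have hodd : (1 : ℝ) ≤ |((2 * t + 1 : ℤ) : ℝ)| := by
    exact_mod_cast Int.one_le_abs (by omega)
  rw [show (t : ℝ) + 1 / 2 = ((2 * t + 1 : ℤ) : ℝ) / 2 by push_cast; ring, abs_div]
  push_cast at hodd ⊢
  linarith

lemma one_div_two_mul_le_abs_add_half_div_sub (n m : ℤ) {q : ℕ} (hq : 0 < q) :
    1 / (2 * q) ≤ |((n : ℝ) + 1 / 2) / q - m| := by
  have hq' : (0 : ℝ) < q := by exact_mod_cast hq
  rw [show ((n : ℝ) + 1 / 2) / q - m = (((n - m * q : ℤ) : ℝ) + 1 / 2) / q by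
    push_cast; field_simp; ring, abs_div, abs_of_pos hq', ← div_div]
  gcongr
  exact one_div_two_le_abs_intCast_add_half _

lemma round_mono : Monotone (round : ℝ → ℤ) := fun x y h => by
  simp only [round_eq]
  exact Int.floor_le_floor (by linarith)

lemma card_le_four_mul_of_forall_abs_add_half_div_sub_lt {q : ℕ} (hq : 0 < q) {ε : ℝ}
    (hε : 0 ≤ ε) (m : ℤ) {s : Finset ℤ} (hs : ∀ n ∈ s, |((n : ℝ) + 1 / 2) / q - m| < ε) :
    (#s : ℝ) ≤ 4 * ε * q := by
  obtain rfl | ⟨n₀, hn₀⟩ := s.eq_empty_or_nonempty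
  · simp only [card_empty, CharP.cast_eq_zero]
    positivity
  have hq' : (0 : ℝ) < q := by exact_mod_cast hq
  -- The `1/(2q)` gap makes `2εq > 1` as soon as `s` is nonempty; this absorbs the `+ 1` below.
  have hεq : 1 < 2 * ε * q := by
    have h := (one_div_two_mul_le_abs_add_half_div_sub n₀ m hq).trans_lt (hs n₀ hn₀)
    rw [div_lt_iff₀ (by positivity)] at h
    linarith
  have hsub : s ⊆ Icc ⌈m * q - ε * q - 1 / 2⌉ ⌊m * q + ε * q - 1 / 2⌋ := by
    intro n hn
    have h := hs n hn
    rw [show ((n : ℝ) + 1 / 2) / q - m = ((n : ℝ) + 1 / 2 - m * q) / q by field_simp, abs_div,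
      abs_of_pos hq', div_lt_iff₀ hq', abs_lt] at h
    simp only [mem_Icc, Int.ceil_le, Int.le_floor]
    constructor <;> linarith
  calc (#s : ℝ) ≤ #(Icc ⌈m * q - ε * q - 1 / 2⌉ ⌊m * q + ε * q - 1 / 2⌋) := by
        exact_mod_cast card_le_card hsub
    _ ≤ 2 * ε * q + 1 := by
        have := Int.card_Icc_ceil_floor_le (u := m * q - ε * q - 1 / 2) (v := m * q + ε * q - 1 / 2)
          (by nlinarith)
        linarith
    _ ≤ 4 * ε * q := by linarith

lemma card_filter_abs_sub_round_lt_le {q : ℕ} (hq : 0 < q) {ε : ℝ} (hε : 0 ≤ ε) {a b : ℤ}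
    (hab : a ≤ b) :
    (#((Icc a b).filter fun n : ℤ =>
      |((n : ℝ) + 1 / 2) / q - round (((n : ℝ) + 1 / 2) / q)| < ε) : ℝ) ≤
      4 * ε * (b - a + 2 * q) := by
  set x : ℤ → ℝ := fun n => ((n : ℝ) + 1 / 2) / q
  have hx : Monotone x := fun m n h => by
    simp only [x]
    gcongr
  set s : Finset ℤ := {n ∈ Icc a b | |x n - round (x n)| < ε}
  set t := Icc (round (x a)) (round (x b))
  have hmaps : (s : Set ℤ).MapsTo (fun n => round (x n)) t := fun n hn => by
    obtain ⟨hn, -⟩ := mem_filter.1 hn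
    exact mem_Icc.2 ⟨round_mono (hx (mem_Icc.1 hn).1), round_mono (hx (mem_Icc.1 hn).2)⟩
  have hfiber : ∀ m ∈ t, (#{n ∈ s | round (x n) = m} : ℝ) ≤ 4 * ε * q := fun m _ =>
    card_le_four_mul_of_forall_abs_add_half_div_sub_lt hq hε m fun n hn => by
      obtain ⟨hns, rfl⟩ := mem_filter.1 hn
      exact (mem_filter.1 hns).2
  have ht : (#t : ℝ) ≤ (b - a) / q + 2 := by
    rw [Int.cast_card_Icc]
    have hab' : (0 : ℝ) ≤ b - a := by exact_mod_cast sub_nonneg.2 hab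
    refine max_le ?_ (by positivity)
    have : x b - x a = (b - a) / q := by simp only [x]; ring
    linarith [round_le_add_half (x b), sub_half_lt_round (x a)]
  calc (#s : ℝ) = ∑ m ∈ t, (#{n ∈ s | round (x n) = m} : ℝ) := by
        exact_mod_cast card_eq_sum_card_fiberwise hmaps
    _ ≤ #t * (4 * ε * q) := by
        simpa using sum_le_sum hfiber
    _ ≤ ((b - a) / q + 2) * (4 * ε * q) := by gcongr
    _ = 4 * ε * (b - a + 2 * q) := by field_simp

lemma card_filter_abs_sub_round_lt_le_of_sq_le {d : ℕ} (hd : 0 < d) {N ε : ℝ} (hε : 0 ≤ ε)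
    (hN : 1 ≤ N) (hdN : (d : ℝ) ^ 2 ≤ 2 * N) :
    (#((Icc ⌈N⌉ ⌊2 * N⌋).filter fun n : ℤ =>
      |((n : ℝ) + 1 / 2) / (d : ℝ) ^ 2 - round (((n : ℝ) + 1 / 2) / (d : ℝ) ^ 2)| < ε) : ℝ) ≤
      20 * ε * N := by
  have hab : ⌈N⌉ ≤ ⌊2 * N⌋ := Int.ceil_le.2 (by linarith [Int.sub_one_lt_floor (2 * N)])
  have h := card_filter_abs_sub_round_lt_le (pow_pos hd 2) hε hab
  push_cast at h
  refine h.trans ?_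
  have := Int.le_ceil N
  have := Int.floor_le (2 * N)
  nlinarith

lemma sum_divisors_inv_le_one_add_log (k : ℕ) : ∑ d ∈ k.divisors, (d : ℝ)⁻¹ ≤ 1 + log k :=
  calc ∑ d ∈ k.divisors, (d : ℝ)⁻¹ ≤ ∑ d ∈ Icc 1 k, (d : ℝ)⁻¹ :=
        sum_le_sum_of_subset_of_nonneg
          (fun d hd => mem_Icc.2 ⟨Nat.pos_of_mem_divisors hd, Nat.divisor_le hd⟩)
          fun _ _ _ => by positivity
    _ = harmonic k := by simp [harmonic_eq_sum_Icc]
    _ ≤ 1 + log k := harmonic_le_one_add_log k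

lemma sum_divisors_inv_mul_one_add_log_sq_le_two (k : ℕ) :
    ∑ d ∈ k.divisors, ((d : ℝ) * (1 + log k ^ 2))⁻¹ ≤ 2 := by
  simp_rw [mul_inv, ← sum_mul]
  rw [← div_eq_mul_inv, div_le_iff₀ (by positivity)]
  nlinarith [sum_divisors_inv_le_one_add_log k, sq_nonneg (log k - 1 / 4)]

theorem stmt_0 :
    ∃ c : ℝ, 0 < c ∧
      ∀ (k : ℕ) (N : ℝ), 0 < k → 2 ≤ N → (k : ℝ) ≤ N →
        ∃ Nk : ℤ, N ≤ (Nk : ℝ) ∧ (Nk : ℝ) ≤ 2 * N ∧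
          ∀ d : ℕ, d ∣ k → (d : ℝ) ≤ Real.sqrt (2 * N) →
            c / (d * (1 + (Real.log k) ^ 2)) ≤
              |((Nk : ℝ) + 1 / 2) / (d : ℝ) ^ 2 -
                round (((Nk : ℝ) + 1 / 2) / (d : ℝ) ^ 2)| := by
  refine ⟨1 / 100, by norm_num, fun k N hk hN _ => ?_⟩
  set I : Finset ℤ := Icc ⌈N⌉ ⌊2 * N⌋
  set D := k.divisors.filter fun d : ℕ => (d : ℝ) ≤ √(2 * N)
  set bad : ℕ → Finset ℤ := fun d => I.filter fun n : ℤ =>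
    |((n : ℝ) + 1 / 2) / (d : ℝ) ^ 2 - round (((n : ℝ) + 1 / 2) / (d : ℝ) ^ 2)| <
      1 / 100 / (d * (1 + log k ^ 2))
  have hbad (d) (hd : d ∈ D) : (#(bad d) : ℝ) ≤ N / 5 * ((d : ℝ) * (1 + log k ^ 2))⁻¹ := by
    obtain ⟨hdk, hdN⟩ := mem_filter.1 hd
    have hdN' := (Real.le_sqrt (by positivity) (by positivity)).1 hdN
    refine (card_filter_abs_sub_round_lt_le_of_sq_le (Nat.pos_of_mem_divisors hdk)
      (ε := 1 / 100 / (d * (1 + log k ^ 2))) (by positivity) (by linarith) hdN').trans_eq ?_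
    ring
  have hcard : (#(D.biUnion bad) : ℝ) < #I :=
    calc (#(D.biUnion bad) : ℝ) ≤ ∑ d ∈ D, (#(bad d) : ℝ) := by exact_mod_cast card_biUnion_le
      _ ≤ N / 5 * ∑ d ∈ D, ((d : ℝ) * (1 + log k ^ 2))⁻¹ := by
        rw [mul_sum]
        exact sum_le_sum hbad
      _ ≤ N / 5 * 2 := by
        gcongr
        refine (sum_le_sum_of_subset_of_nonneg (filter_subset _ _) fun _ _ _ => ?_).trans
          (sum_divisors_inv_mul_one_add_log_sq_le_two k)
        positivity
      _ < #I := by linarith [Int.le_card_Icc_ceil_floor N (2 * N)]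
  obtain ⟨n, hnI, hn⟩ := exists_mem_notMem_of_card_lt_card (by exact_mod_cast hcard)
  obtain ⟨hNn, hn2N⟩ := mem_Icc.1 hnI
  refine ⟨n, Int.ceil_le.1 hNn, Int.le_floor.1 hn2N, fun d hdk hdN => not_lt.1 fun h => hn ?_⟩
  have hd : d ∈ D := mem_filter.2 ⟨Nat.mem_divisors.2 ⟨hdk, hk.ne'⟩, hdN⟩
  exact mem_biUnion.2 ⟨d, hd, mem_filter.2 ⟨hnI, h⟩⟩
end

section
/- Let [a,b] be a real interval and f, g : [a,b] → ℝ with f continuously differentiable on [a,b] and g/f' monotonic. Suppose M > 0 is such that f'(x)/g(x) ≥ M for all x in [a,b] (or f'(x)/g(x) ≤ -M for all x in [a,b]). Then |∫_a^b g(x) e(f(x)) dx| ≤ 2/(π M). -/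
/-!
Write `g = φ f'` with `φ = g / f'` taking values in `(0, 1/M]`. By the layer-cake formula
`∫ g e(f) = ∫_0^{1/M} (∫_{φ > t} f' e(f)) dt`, and since `φ` is monotone each superlevel set
`{φ > t}` is an interval up to its endpoints. There `f' e(f)` has the primitive `e(f) / (2πi)`,
so every inner integral has norm at most `1/π`, which gives the bound `1/(πM)`. The case
`f'/g ≤ -M` reduces to this one by replacing `g` with `-g`.
-/

open Real Complex MeasureTheory Set

theorem continuousOn_deriv_mul_exp {f f' : ℝ → ℝ} {s : Set ℝ}
    (hderiv : ∀ x ∈ s, HasDerivAt f (f' x) x) (hf' : ContinuousOn f' s) :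
    ContinuousOn (fun x => (f' x : ℂ) * exp (2 * π * I * f x)) s := by
  have hf : ContinuousOn f s := fun x hx => (hderiv x hx).continuousAt.continuousWithinAt
  fun_prop

theorem norm_intervalIntegral_deriv_mul_exp_le {f f' : ℝ → ℝ} {c d : ℝ}
    (hderiv : ∀ x ∈ uIcc c d, HasDerivAt f (f' x) x) (hf' : ContinuousOn f' (uIcc c d)) :
    ‖∫ x in c..d, (f' x : ℂ) * exp (2 * π * I * f x)‖ ≤ 1 / π := by
  have hprim : ∀ x ∈ uIcc c d, HasDerivAt (fun y => exp (2 * π * I * f y) / (2 * π * I))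
      ((f' x : ℂ) * exp (2 * π * I * f x)) x := by
    intro x hx
    refine (((hderiv x hx).ofReal_comp.const_mul (2 * π * I)).cexp.div_const
      (2 * π * I)).congr_deriv ?_
    have : (2 * π * I : ℂ) ≠ 0 := by simp [pi_ne_zero]
    field_simp
  have hnorm : ∀ y, ‖exp (2 * π * I * f y) / (2 * π * I)‖ = 1 / (2 * π) := by
    intro y
    rw [norm_div, show 2 * π * I * f y = ((2 * π * f y : ℝ) : ℂ) * I by push_cast; ring,
      norm_exp_ofReal_mul_I]
    simp [abs_of_pos pi_pos]
  rw [intervalIntegral.integral_eq_sub_of_hasDerivAt hprim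
    (continuousOn_deriv_mul_exp hderiv hf').intervalIntegrable]
  calc _ ≤ _ := norm_sub_le _ _
    _ = 1 / π := by rw [hnorm, hnorm]; ring

theorem Set.OrdConnected.ae_eq_Icc_csInf_csSup {μ : Measure ℝ} [NullSingletonClass μ]
    [IsLocallyFiniteMeasure μ] {S : Set ℝ} (hS : S.OrdConnected) (hb : BddBelow S)
    (ha : BddAbove S) : S =ᵐ[μ] Icc (sInf S) (sSup S) := by
  rcases S.eq_empty_or_nonempty with rfl | hne
  · simpa using (ae_eq_empty.2 (measure_singleton (μ := μ) 0)).symm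
  refine ae_eq_of_subset_of_measure_ge (subset_Icc_csInf_csSup hb ha) ?_
    hS.measurableSet.nullMeasurableSet measure_Icc_lt_top.ne
  calc μ (Icc (sInf S) (sSup S)) = μ (Ioo (sInf S) (sSup S)) := measure_congr Ioo_ae_eq_Icc.symm
    _ ≤ μ S := measure_mono (IsConnected.Ioo_csInf_csSup_subset ⟨hne, hS.isPreconnected⟩ hb ha)

theorem integral_smul_eq_integral_setIntegral_lt {α E : Type*} [MeasurableSpace α]
    {μ : Measure α} [SFinite μ] [NormedAddCommGroup E] [NormedSpace ℝ E] [CompleteSpace E]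
    {F : α → E} {φ : α → ℝ} {K : ℝ} (hF : Integrable F μ) (hφ : Measurable φ)
    (hφ0 : ∀ x, 0 ≤ φ x) (hφK : ∀ x, φ x ≤ K) :
    ∫ x, φ x • F x ∂μ = ∫ t in Ioc 0 K, ∫ x in {x | t < φ x}, F x ∂μ := by
  have hslice : ∀ x, ∫ t in Ioc 0 K, (Iio (φ x)).indicator (fun _ => F x) t = φ x • F x := by
    intro x
    have hIoo : Ioc 0 K ∩ Iio (φ x) = Ioo 0 (φ x) := by
      ext t
      simp only [mem_inter_iff, mem_Ioc, mem_Iio, mem_Ioo]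
      constructor <;> intro h <;> refine ⟨?_, ?_⟩ <;> grind [hφK x]
    rw [setIntegral_indicator measurableSet_Iio, hIoo, setIntegral_const,
      volume_real_Ioo_of_le (hφ0 x), sub_zero]
  have hint : Integrable (fun p : α × ℝ => (Iio (φ p.1)).indicator (fun _ => F p.1) p.2)
      (μ.prod (volume.restrict (Ioc 0 K))) :=
    (hF.comp_fst _).indicator (measurableSet_lt measurable_snd (hφ.comp measurable_fst))
  calc ∫ x, φ x • F x ∂μ
      = ∫ x, (∫ t in Ioc 0 K, (Iio (φ x)).indicator (fun _ => F x) t) ∂μ := by simp only [hslice]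
    _ = ∫ t in Ioc 0 K, ∫ x, (Iio (φ x)).indicator (fun _ => F x) t ∂μ :=
      integral_integral_swap hint
    _ = ∫ t in Ioc 0 K, ∫ x in {x | t < φ x}, F x ∂μ := by
      congr 1 with t
      rw [← integral_indicator (measurableSet_lt measurable_const hφ)]
      rfl

theorem norm_setIntegral_deriv_mul_exp_le_of_ordConnected {f f' : ℝ → ℝ} {a b : ℝ}
    {S : Set ℝ} (hderiv : ∀ x ∈ Icc a b, HasDerivAt f (f' x) x)
    (hf' : ContinuousOn f' (Icc a b)) (hS : S.OrdConnected) (hSab : S ⊆ Icc a b) :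
    ‖∫ x in S, (f' x : ℂ) * exp (2 * π * I * f x)‖ ≤ 1 / π := by
  rcases S.eq_empty_or_nonempty with rfl | hne
  · simp only [Measure.restrict_empty, integral_zero_measure, norm_zero]
    positivity
  have hb : BddBelow S := bddBelow_Icc.mono hSab
  have ha : BddAbove S := bddAbove_Icc.mono hSab
  have hle : sInf S ≤ sSup S := csInf_le_csSup hne hb ha
  have hsub : uIcc (sInf S) (sSup S) ⊆ Icc a b := by
    rw [uIcc_of_le hle]
    exact Icc_subset_Icc (le_csInf hne fun x hx => (hSab hx).1)
      (csSup_le hne fun x hx => (hSab hx).2)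
  rw [setIntegral_congr_set (hS.ae_eq_Icc_csInf_csSup hb ha), integral_Icc_eq_integral_Ioc,
    ← intervalIntegral.integral_of_le hle]
  exact norm_intervalIntegral_deriv_mul_exp_le (fun x hx => hderiv x (hsub hx)) (hf'.mono hsub)

theorem norm_integral_mul_exp_le_of_le_deriv_div {a b M : ℝ} {f f' g : ℝ → ℝ} (hab : a ≤ b)
    (hM : 0 < M) (hf' : ContinuousOn f' (Icc a b))
    (hderiv : ∀ x ∈ Icc a b, HasDerivAt f (f' x) x)
    (hmono : MonotoneOn (fun x => g x / f' x) (Icc a b) ∨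
      AntitoneOn (fun x => g x / f' x) (Icc a b))
    (hlow : ∀ x ∈ Icc a b, M ≤ f' x / g x) :
    ‖∫ x in a..b, (g x : ℂ) * exp (2 * π * I * f x)‖ ≤ 1 / (π * M) := by
  set F : ℝ → ℂ := fun x => (f' x : ℂ) * exp (2 * π * I * f x)
  -- `g / f'` extended constantly outside `[a, b]`, hence measurable and bounded on `ℝ`
  set ψ : ℝ → ℝ := fun x => g (projIcc a b hab x) / f' (projIcc a b hab x)
  have hψ : ∀ x, 0 < ψ x ∧ ψ x ≤ 1 / M := by
    intro x
    have h := hlow _ (projIcc a b hab x).2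
    rw [show ψ x = (f' _ / g _)⁻¹ from (inv_div _ _).symm, one_div]
    exact ⟨inv_pos.2 (hM.trans_le h), inv_anti₀ hM h⟩
  have hψmono : Monotone ψ ∨ Antitone ψ := by
    have hproj := monotone_projIcc hab
    rcases hmono with hm | hm
    · exact .inl fun x y hxy => hm (projIcc a b hab x).2 (projIcc a b hab y).2 (hproj hxy)
    · exact .inr fun x y hxy => hm (projIcc a b hab x).2 (projIcc a b hab y).2 (hproj hxy)
  have hψmeas : Measurable ψ := hψmono.elim Monotone.measurable Antitone.measurable
  have hlevel : ∀ t, {x | t < ψ x}.OrdConnected := fun t =>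
    hψmono.elim (fun h => IsUpperSet.ordConnected fun _ _ hxy hx => hx.trans_le (h hxy))
      (fun h => IsLowerSet.ordConnected fun _ _ hxy hx => hx.trans_le (h hxy))
  have hg : ∀ x ∈ Ioc a b, (g x : ℂ) * exp (2 * π * I * f x) = ψ x • F x := by
    intro x hx
    have hx' : x ∈ Icc a b := Ioc_subset_Icc_self hx
    have hf'x : (f' x : ℂ) ≠ 0 :=
      ofReal_ne_zero.2 fun h => by simpa [h] using hM.trans_le (hlow x hx')
    simp only [ψ, F, projIcc_of_mem hab hx', real_smul]
    push_cast
    field_simp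
  have hF : IntegrableOn F (Ioc a b) :=
    (continuousOn_deriv_mul_exp hderiv hf').integrableOn_Icc.mono_set Ioc_subset_Icc_self
  calc ‖∫ x in a..b, (g x : ℂ) * exp (2 * π * I * f x)‖
      = ‖∫ x in Ioc a b, ψ x • F x‖ := by
        rw [intervalIntegral.integral_of_le hab, setIntegral_congr_fun measurableSet_Ioc hg]
    _ = ‖∫ t in Ioc 0 (1 / M), ∫ x in {x | t < ψ x} ∩ Ioc a b, F x‖ := by
        rw [integral_smul_eq_integral_setIntegral_lt hF hψmeas (fun x => (hψ x).1.le)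
          (fun x => (hψ x).2)]
        simp only [Measure.restrict_restrict (measurableSet_lt measurable_const hψmeas)]
    _ ≤ 1 / π * volume.real (Ioc (0 : ℝ) (1 / M)) :=
        norm_setIntegral_le_of_norm_le_const measure_Ioc_lt_top fun t _ =>
          norm_setIntegral_deriv_mul_exp_le_of_ordConnected hderiv hf'
            ((hlevel t).inter ordConnected_Ioc) (inter_subset_right.trans Ioc_subset_Icc_self)
    _ = 1 / (π * M) := by
        rw [volume_real_Ioc_of_le (by positivity)]
        ring

/-- First derivative test for oscillatory integrals. -/
theorem stmt_2 (a b M : ℝ) (f f' g : ℝ → ℝ) (hab : a ≤ b) (hM : 0 < M)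
    (hf' : ContinuousOn f' (Set.Icc a b))
    (hderiv : ∀ x ∈ Set.Icc a b, HasDerivAt f (f' x) x)
    (hmono : MonotoneOn (fun x => g x / f' x) (Set.Icc a b) ∨
      AntitoneOn (fun x => g x / f' x) (Set.Icc a b))
    (hlow : (∀ x ∈ Set.Icc a b, M ≤ f' x / g x) ∨
      (∀ x ∈ Set.Icc a b, f' x / g x ≤ -M)) :
    ‖∫ x in a..b, (g x : ℂ) * Complex.exp (2 * Real.pi * Complex.I * f x)‖ ≤
      2 / (Real.pi * M) := by
  suffices h : ‖∫ x in a..b, (g x : ℂ) * exp (2 * π * I * f x)‖ ≤ 1 / (π * M) from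
    h.trans (by gcongr; norm_num)
  rcases hlow with hlow | hlow
  · exact norm_integral_mul_exp_le_of_le_deriv_div hab hM hf' hderiv hmono hlow
  · have hneg := norm_integral_mul_exp_le_of_le_deriv_div (g := fun x => -g x) hab hM hf' hderiv
      (by simpa only [neg_div] using hmono.symm.imp AntitoneOn.neg MonotoneOn.neg)
      (fun x hx => by rw [div_neg]; linarith [hlow x hx])
    simpa only [ofReal_neg, neg_mul, intervalIntegral.integral_neg, norm_neg] using hneg
end

section
/- Let k, d₁, d₂, m₁, m₂ be positive integers with d₁² m₁ ≠ d₂² m₂, and let X ≥ 2. Then |∫_X^{2X} x^{2/3} cos(6π d₁^{2/3} m₁^{1/3} x^{1/3}/k) cos(6π d₂^{2/3} m₂^{1/3} x^{1/3}/k) dx| ≪ k X^{4/3} / |d₁^{2/3} m₁^{1/3} - d₂^{2/3} m₂^{1/3}|, with an absolute implied constant. -/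
/-!
The phase `c x ^ (1/3)` has derivative `c / (3 x ^ (2/3))`, so the weight `x ^ (2/3)` is exactly what
makes `(3 / c) x ^ (4/3) sin (c x ^ (1/3))` an antiderivative of `x ^ (2/3) cos (c x ^ (1/3))`, up to the
lower-order term `(4 / c) x ^ (1/3) sin (c x ^ (1/3))`; hence the integral over `[a, b]` is `≪ b ^ (4/3) / |c|`.
The product of the two cosines is a half-sum of cosines with frequencies `p + q` and `p - q`; as `p, q ≥ 0`
the smaller one is `|p - q| = 6π |d₁^(2/3) m₁^(1/3) - d₂^(2/3) m₂^(1/3)| / k`.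
-/

open Real Set intervalIntegral

lemma continuous_rpow_const_of_pos {r : ℝ} (hr : 0 < r) : Continuous fun x : ℝ => x ^ r :=
  continuous_id.rpow_const fun _ => Or.inr hr.le

lemma continuous_rpow_two_thirds_mul_cos (c : ℝ) :
    Continuous fun x : ℝ => x ^ (2 / 3 : ℝ) * cos (c * x ^ (1 / 3 : ℝ)) :=
  (continuous_rpow_const_of_pos (by norm_num)).mul
    (continuous_cos.comp (continuous_const.mul (continuous_rpow_const_of_pos (by norm_num))))

lemma hasDerivAt_rpow_four_thirds_mul_sin {c x : ℝ} (hc : c ≠ 0) (hx : 0 < x) :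
    HasDerivAt (fun x => 3 / c * x ^ (4 / 3 : ℝ) * sin (c * x ^ (1 / 3 : ℝ)))
      (x ^ (2 / 3 : ℝ) * cos (c * x ^ (1 / 3 : ℝ)) +
        4 / c * (x ^ (1 / 3 : ℝ) * sin (c * x ^ (1 / 3 : ℝ)))) x := by
  have h43 := (hasDerivAt_rpow_const (p := (4 / 3 : ℝ)) (Or.inl hx.ne')).const_mul (3 / c)
  have h13 := (hasDerivAt_rpow_const (p := (1 / 3 : ℝ)) (Or.inl hx.ne')).const_mul c
  refine (h43.mul ((hasDerivAt_sin _).comp x h13)).congr_deriv ?_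
  have hexp : x ^ (4 / 3 : ℝ) * x ^ ((1 / 3 : ℝ) - 1) = x ^ (2 / 3 : ℝ) := by
    rw [← rpow_add hx]; norm_num
  have hexp' : x ^ ((4 / 3 : ℝ) - 1) = x ^ (1 / 3 : ℝ) := by norm_num
  rw [Function.comp_apply, hexp', ← hexp]
  field_simp
  ring

lemma integral_rpow_mul_cos_eq {c a b : ℝ} (hc : c ≠ 0) (ha : 0 ≤ a) (hab : a ≤ b) :
    ∫ x in a..b, x ^ (2 / 3 : ℝ) * cos (c * x ^ (1 / 3 : ℝ)) =
      3 / c * (b ^ (4 / 3 : ℝ) * sin (c * b ^ (1 / 3 : ℝ)) -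
          a ^ (4 / 3 : ℝ) * sin (c * a ^ (1 / 3 : ℝ))) -
        4 / c * ∫ x in a..b, x ^ (1 / 3 : ℝ) * sin (c * x ^ (1 / 3 : ℝ)) := by
  have hphase : Continuous fun x : ℝ => c * x ^ (1 / 3 : ℝ) :=
    continuous_const.mul (continuous_rpow_const_of_pos (by norm_num))
  have hf := continuous_rpow_two_thirds_mul_cos c
  have hg : Continuous fun x : ℝ => x ^ (1 / 3 : ℝ) * sin (c * x ^ (1 / 3 : ℝ)) :=
    (continuous_rpow_const_of_pos (by norm_num)).mul (continuous_sin.comp hphase)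
  have hH : Continuous fun x : ℝ => 3 / c * x ^ (4 / 3 : ℝ) * sin (c * x ^ (1 / 3 : ℝ)) :=
    (continuous_const.mul (continuous_rpow_const_of_pos (by norm_num))).mul
      (continuous_sin.comp hphase)
  have ftc := integral_eq_sub_of_hasDerivAt_of_le hab hH.continuousOn
    (fun x hx => hasDerivAt_rpow_four_thirds_mul_sin hc (ha.trans_lt hx.1))
    ((hf.add (continuous_const.mul hg)).intervalIntegrable a b)
  rw [integral_add (hf.intervalIntegrable a b) ((hg.intervalIntegrable a b).const_mul _),
    integral_const_mul] at ftc
  linear_combination ftc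

lemma abs_integral_rpow_mul_sin_le (c : ℝ) {a b : ℝ} (ha : 0 ≤ a) (hab : a ≤ b) :
    |∫ x in a..b, x ^ (1 / 3 : ℝ) * sin (c * x ^ (1 / 3 : ℝ))| ≤ b ^ (4 / 3 : ℝ) := by
  have hbound : ∀ x ∈ uIoc a b, ‖x ^ (1 / 3 : ℝ) * sin (c * x ^ (1 / 3 : ℝ))‖ ≤ b ^ (1 / 3 : ℝ) := by
    intro x hx
    rw [uIoc_of_le hab] at hx
    have hx0 : 0 ≤ x := ha.trans hx.1.le
    rw [norm_mul, norm_of_nonneg (rpow_nonneg hx0 _)]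
    exact (mul_le_of_le_one_right (rpow_nonneg hx0 _) (abs_sin_le_one _)).trans
      (rpow_le_rpow hx0 hx.2 (by norm_num))
  have hb0 : 0 ≤ b := ha.trans hab
  calc _ ≤ b ^ (1 / 3 : ℝ) * |b - a| := norm_integral_le_of_norm_le_const hbound
    _ ≤ b ^ (1 / 3 : ℝ) * b ^ (1 : ℝ) := by
        rw [rpow_one, abs_of_nonneg (sub_nonneg.2 hab)]
        gcongr
        linarith
    _ = b ^ (4 / 3 : ℝ) := by rw [← rpow_add' hb0 (by norm_num)]; norm_num

lemma abs_integral_rpow_mul_cos_le {c a b : ℝ} (hc : c ≠ 0) (ha : 0 ≤ a) (hab : a ≤ b) :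
    |∫ x in a..b, x ^ (2 / 3 : ℝ) * cos (c * x ^ (1 / 3 : ℝ))| ≤ 10 * b ^ (4 / 3 : ℝ) / |c| := by
  have hendpoint : ∀ y, 0 ≤ y → y ≤ b →
      |y ^ (4 / 3 : ℝ) * sin (c * y ^ (1 / 3 : ℝ))| ≤ b ^ (4 / 3 : ℝ) := fun y hy hyb => by
    rw [abs_mul, abs_of_nonneg (rpow_nonneg hy _)]
    exact (mul_le_of_le_one_right (rpow_nonneg hy _) (abs_sin_le_one _)).trans
      (rpow_le_rpow hy hyb (by norm_num))
  have hb := abs_le.1 (hendpoint b (ha.trans hab) le_rfl)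
  have ha' := abs_le.1 (hendpoint a ha hab)
  have hg := abs_le.1 (abs_integral_rpow_mul_sin_le c ha hab)
  rw [integral_rpow_mul_cos_eq hc ha hab, div_mul_eq_mul_div, div_mul_eq_mul_div, ← sub_div,
    abs_div]
  gcongr
  rw [abs_le]
  constructor <;> linarith

lemma abs_integral_rpow_mul_cos_mul_cos_le {p q a b : ℝ} (hp : 0 ≤ p) (hq : 0 ≤ q) (hpq : p ≠ q)
    (ha : 0 ≤ a) (hab : a ≤ b) :
    |∫ x in a..b, x ^ (2 / 3 : ℝ) * cos (p * x ^ (1 / 3 : ℝ)) * cos (q * x ^ (1 / 3 : ℝ))| ≤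
      10 * b ^ (4 / 3 : ℝ) / |p - q| := by
  have hsub : 0 < |p - q| := abs_pos.2 (sub_ne_zero.2 hpq)
  have hle : |p - q| ≤ |p + q| := by
    rw [abs_of_nonneg (add_nonneg hp hq)]
    exact abs_sub_le_iff.2 ⟨by linarith, by linarith⟩
  have hsum := abs_integral_rpow_mul_cos_le (abs_pos.1 (hsub.trans_le hle)) ha hab
  have hdiff := abs_integral_rpow_mul_cos_le (sub_ne_zero.2 hpq) ha hab
  have hsum_le : 10 * b ^ (4 / 3 : ℝ) / |p + q| ≤ 10 * b ^ (4 / 3 : ℝ) / |p - q| :=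
    div_le_div_of_nonneg_left (by positivity [ha.trans hab]) hsub hle
  have hprod : ∀ x : ℝ,
      x ^ (2 / 3 : ℝ) * cos (p * x ^ (1 / 3 : ℝ)) * cos (q * x ^ (1 / 3 : ℝ)) =
        (x ^ (2 / 3 : ℝ) * cos ((p + q) * x ^ (1 / 3 : ℝ)) +
          x ^ (2 / 3 : ℝ) * cos ((p - q) * x ^ (1 / 3 : ℝ))) / 2 := fun x => by
    rw [add_mul, sub_mul, cos_add, cos_sub]; ring
  simp_rw [hprod]
  rw [integral_div, integral_add ((continuous_rpow_two_thirds_mul_cos _).intervalIntegrable a b)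
    ((continuous_rpow_two_thirds_mul_cos _).intervalIntegrable a b), abs_div, abs_two,
    div_le_iff₀ two_pos]
  linarith [abs_add_le (∫ x in a..b, x ^ (2 / 3 : ℝ) * cos ((p + q) * x ^ (1 / 3 : ℝ)))
    (∫ x in a..b, x ^ (2 / 3 : ℝ) * cos ((p - q) * x ^ (1 / 3 : ℝ)))]

lemma rpow_two_thirds_mul_rpow_one_third_pow_three {d m : ℝ} (hd : 0 ≤ d) (hm : 0 ≤ m) :
    (d ^ (2 / 3 : ℝ) * m ^ (1 / 3 : ℝ)) ^ 3 = d ^ 2 * m := by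
  rw [mul_pow, ← rpow_natCast, ← rpow_natCast, ← rpow_mul hd, ← rpow_mul hm]
  norm_num

theorem stmt_16 :
    ∃ C : ℝ, 0 < C ∧
      ∀ (k d₁ d₂ m₁ m₂ : ℕ), 0 < k → 0 < d₁ → 0 < d₂ → 0 < m₁ → 0 < m₂ →
        d₁ ^ 2 * m₁ ≠ d₂ ^ 2 * m₂ →
        ∀ X : ℝ, 2 ≤ X →
          |∫ x in X..(2 * X), x ^ ((2 : ℝ) / 3) *
              Real.cos (6 * Real.pi * (d₁ : ℝ) ^ ((2 : ℝ) / 3) * (m₁ : ℝ) ^ ((1 : ℝ) / 3) *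
                x ^ ((1 : ℝ) / 3) / k) *
              Real.cos (6 * Real.pi * (d₂ : ℝ) ^ ((2 : ℝ) / 3) * (m₂ : ℝ) ^ ((1 : ℝ) / 3) *
                x ^ ((1 : ℝ) / 3) / k)| ≤
            C * k * X ^ ((4 : ℝ) / 3) /
              |(d₁ : ℝ) ^ ((2 : ℝ) / 3) * (m₁ : ℝ) ^ ((1 : ℝ) / 3) -
                (d₂ : ℝ) ^ ((2 : ℝ) / 3) * (m₂ : ℝ) ^ ((1 : ℝ) / 3)| := by
  refine ⟨10 * 2 ^ (4 / 3 : ℝ) / (6 * π), by positivity, ?_⟩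
  intro k d₁ d₂ m₁ m₂ hk _ _ _ _ hne X hX
  set α := (d₁ : ℝ) ^ (2 / 3 : ℝ) * (m₁ : ℝ) ^ (1 / 3 : ℝ) with hα
  set β := (d₂ : ℝ) ^ (2 / 3 : ℝ) * (m₂ : ℝ) ^ (1 / 3 : ℝ) with hβ
  have hαβ : α - β ≠ 0 := by
    refine sub_ne_zero.2 fun h => hne ?_
    have hcube := congrArg (· ^ 3) h
    simp only [hα, hβ, rpow_two_thirds_mul_rpow_one_third_pow_three (Nat.cast_nonneg _)
      (Nat.cast_nonneg _)] at hcube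
    exact_mod_cast hcube
  have hk' : (0 : ℝ) < k := Nat.cast_pos.2 hk
  have hX0 : 0 ≤ X := by linarith
  have hfreq : 6 * π * α / k - 6 * π * β / k = 6 * π / k * (α - β) := by ring
  have hpq : 6 * π * α / k ≠ 6 * π * β / k :=
    sub_ne_zero.1 (hfreq ▸ mul_ne_zero (by positivity) hαβ)
  calc _ = |∫ x in X..(2 * X), x ^ (2 / 3 : ℝ) * cos (6 * π * α / k * x ^ (1 / 3 : ℝ)) *
          cos (6 * π * β / k * x ^ (1 / 3 : ℝ))| := by
        congr 2; ext x; rw [hα, hβ]; ring_nf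
    _ ≤ 10 * (2 * X) ^ (4 / 3 : ℝ) / |6 * π * α / k - 6 * π * β / k| :=
        abs_integral_rpow_mul_cos_mul_cos_le (by positivity) (by positivity) hpq hX0 (by linarith)
    _ = _ := by
        rw [hfreq, abs_mul, abs_of_pos (by positivity), mul_rpow zero_le_two hX0]
        field_simp
end

section
/- Let d, k be positive integers with d | k, N ≥ 2 and let N_k be an integer with N ≤ N_k ≤ 2N such that ‖(N_k+1/2)/d²‖ ≥ c/(d(1+log² k)). Then ∑_{m : d² m ≤ N_k} 1/(N_k + 1/2 - d² m) ≤ C d^{-1} (1 + log² k)(1 + log N) for a constant C depending only on c. -/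
/-!
With `x = (N_k + 1/2)/d²` the sum is `d⁻² ∑_{1 ≤ m ≤ M} 1/(x - m)` with `M ≤ x`. Since every
integer is at least `‖x‖` away from `x`, the top term is at most `1/‖x‖ ≤ d(1 + log² k)/c`; the
remaining terms satisfy `x - m ≥ M - m`, so they add up to at most a harmonic number
`H_{M-1} ≤ 1 + log M ≤ 1 + log 2N`.
-/

open Real Finset

lemma sum_Icc_one_div_natCast_le_one_add_log (n : ℕ) :
    ∑ j ∈ Icc 1 n, 1 / (j : ℝ) ≤ 1 + log n := by
  simpa [harmonic_eq_sum_Icc, one_div] using harmonic_le_one_add_log n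

lemma sum_Icc_one_div_sub_le_one_add_log {x : ℝ} {n : ℕ} (hx : (n + 1 : ℝ) ≤ x) :
    ∑ m ∈ Icc 1 n, 1 / (x - m) ≤ 1 + log n := by
  calc ∑ m ∈ Icc 1 n, 1 / (x - m)
      ≤ ∑ m ∈ Icc 1 n, 1 / ((n + 1 - m : ℕ) : ℝ) := by
        refine sum_le_sum fun m hm => ?_
        have hmn : m ≤ n := (mem_Icc.1 hm).2
        have hpos : (0 : ℝ) < (n + 1 - m : ℕ) := by exact_mod_cast Nat.sub_pos_of_lt (by omega)
        gcongr
        push_cast [Nat.cast_sub (by omega : m ≤ n + 1)]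
        linarith
    _ = ∑ j ∈ Icc 1 n, 1 / (j : ℝ) :=
        sum_nbij' (n + 1 - ·) (n + 1 - ·) (by simp; omega) (by simp; omega)
          (by simp; omega) (by simp; omega) (fun _ _ => rfl)
    _ ≤ 1 + log n := sum_Icc_one_div_natCast_le_one_add_log n

lemma sum_Icc_one_div_sub_le {x δ : ℝ} {M : ℕ} (hδ : 0 < δ) (hδx : δ ≤ |x - round x|)
    (hM : (M : ℝ) ≤ x) :
    ∑ m ∈ Icc 1 M, 1 / (x - m) ≤ 1 / δ + (1 + log M) := by
  rcases M with _ | n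
  · rw [Icc_eq_empty_of_lt zero_lt_one, sum_empty, Nat.cast_zero, log_zero]
    positivity
  rw [sum_Icc_succ_top (by omega)]
  push_cast at hM ⊢
  have hδ_le : δ ≤ x - (n + 1) := by
    simpa [abs_of_nonneg (sub_nonneg.2 hM)] using hδx.trans (round_le x (n + 1))
  have htop : 1 / (x - (n + 1)) ≤ 1 / δ := one_div_le_one_div_of_le hδ hδ_le
  have hlog : log n ≤ log (n + 1) := by
    rcases n.eq_zero_or_pos with rfl | hn
    · simp
    · exact log_le_log (by positivity) (by linarith)
  linarith [sum_Icc_one_div_sub_le_one_add_log (x := x) (n := n) (by linarith)]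

lemma sum_Icc_one_div_sub_mul_le {y δ D : ℝ} {M : ℕ} (hD : 0 < D) (hδ : 0 < δ)
    (hδy : δ ≤ |y / D - round (y / D)|) (hM : D * M ≤ y) :
    ∑ m ∈ Icc 1 M, 1 / (y - D * m) ≤ D⁻¹ * (1 / δ + (1 + log M)) := by
  have hterm (m : ℕ) : 1 / (y - D * m) = D⁻¹ * (1 / (y / D - m)) := by
    field_simp
  simp_rw [hterm, ← mul_sum]
  gcongr
  exact sum_Icc_one_div_sub_le hδ hδy ((le_div_iff₀' hD).2 hM)

lemma natCast_mul_toNat_div_le {n : ℤ} (hn : 0 ≤ n) (D : ℕ) :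
    (D : ℝ) * (n.toNat / D : ℕ) ≤ n := by
  rw [← Int.toNat_of_nonneg hn, Int.cast_natCast, mul_comm]
  exact_mod_cast Nat.div_mul_le_self n.toNat D

lemma log_natCast_le_one_add_log {M : ℕ} {N : ℝ} (hN : 1 ≤ N) (hM : (M : ℝ) ≤ 2 * N) :
    log M ≤ 1 + log N := by
  have hlog_two : log 2 < 1 := by linarith [log_two_lt_d9]
  have : log M ≤ log (2 * N) := by
    rcases M.eq_zero_or_pos with h | h
    · rw [h, Nat.cast_zero, log_zero]; exact log_nonneg (by linarith)
    · exact log_le_log (by exact_mod_cast h) hM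
  rw [log_mul two_ne_zero (by linarith)] at this
  linarith

theorem stmt_17 (c : ℝ) (hc : 0 < c) :
    ∃ C : ℝ, 0 < C ∧
      ∀ (d k : ℕ) (N : ℝ) (Nk : ℤ), 0 < d → d ∣ k → 2 ≤ N →
        N ≤ (Nk : ℝ) → (Nk : ℝ) ≤ 2 * N →
        c / (d * (1 + (Real.log k) ^ 2)) ≤
          |((Nk : ℝ) + 1 / 2) / (d : ℝ) ^ 2 -
            round (((Nk : ℝ) + 1 / 2) / (d : ℝ) ^ 2)| →
        ∑ m ∈ Finset.Icc 1 (Nk.toNat / d ^ 2),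
            1 / ((Nk : ℝ) + 1 / 2 - (d : ℝ) ^ 2 * (m : ℝ)) ≤
          C * (d : ℝ)⁻¹ * (1 + (Real.log k) ^ 2) * (1 + Real.log N) := by
  refine ⟨1 / c + 2, by positivity, fun d k N Nk hd _ hN hNNk hNk hdist => ?_⟩
  set A := log k ^ 2
  set M := Nk.toNat / d ^ 2
  have hMd : (d : ℝ) ^ 2 * M ≤ Nk := by
    have h := natCast_mul_toNat_div_le (by exact_mod_cast (by linarith : (0 : ℝ) ≤ Nk)) (d ^ 2)
    push_cast at h
    exact h
  have hM_le_sq_mul : (M : ℝ) ≤ (d : ℝ) ^ 2 * M :=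
    le_mul_of_one_le_left (by positivity) (by exact_mod_cast Nat.one_le_pow _ _ hd)
  have hlogM : log M ≤ 1 + log N := log_natCast_le_one_add_log (by linarith) (by linarith)
  have hsum := sum_Icc_one_div_sub_mul_le (by positivity) (by positivity) hdist
    (by linarith : (d : ℝ) ^ 2 * M ≤ Nk + 1 / 2)
  have hlogN : 0 ≤ log N := log_nonneg (by linarith)
  have hd_inv : (d : ℝ)⁻¹ ≤ 1 := inv_le_one_of_one_le₀ (by exact_mod_cast hd)
  have hA : 0 ≤ A := sq_nonneg _
  calc _ ≤ ((d : ℝ) ^ 2)⁻¹ * (1 / (c / (d * (1 + A))) + (1 + log M)) := hsum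
    _ = (d : ℝ)⁻¹ * ((1 + A) / c + (d : ℝ)⁻¹ * (1 + log M)) := by field_simp
    _ ≤ (d : ℝ)⁻¹ * ((1 + A) / c * (1 + log N) + 1 * ((1 + A) * (2 * (1 + log N)))) := by
        gcongr
        · exact le_mul_of_one_le_right (by positivity) (by linarith)
        · nlinarith [mul_nonneg hA (by linarith : (0 : ℝ) ≤ 2 * (1 + log N))]
    _ = (1 / c + 2) * (d : ℝ)⁻¹ * (1 + A) * (1 + log N) := by ring
end
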